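/- arXiv:2007.06913 — 4 statements merged into one kernel-verified Lean document; each statement's English description precedes it below -/
import Mathlib

section
/- For every regular language L over a finite alphabet Σ and every nonempty word v ∈ Σ+, the set {(w, (i, j)) ∈ Σ* × ℤ² : w ∈ L, 0 ≤ i ≤ j, v occurs in w at position j (i.e., v = w[j..j+|v|−1], so in particular j + |v| ≤ |w|), and v does not occur in w at any position p with i ≤ p < j} is a cost-enriched regular language with two cost registers. (This set records, for each w ∈ L and start index i, the position j of the first occurrence of v in w at or after position i.) -/
/-- A cost-enriched finite automaton (CEFA) over alphabet `σ` with `k` cost registers: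
states `Q`, a transition set `δ` of tuples `(q, a, q', η)` with update vector
`η : Fin k → ℤ`, initial states `I` and final states `F`. -/
structure CEFA (σ : Type) (k : ℕ) where
  Q : Type
  δ : Set (Q × σ × Q × (Fin k → ℤ))
  I : Set Q
  F : Set Q

namespace CEFA

variable {σ : Type} {k : ℕ}

/-- A CEFA is finite if its state set and its transition set are finite. -/
def IsFinite (A : CEFA σ k) : Prop := Finite A.Q ∧ A.δ.Finite

/-- `Reach A q w n q'` holds if there is a sequence of transitions of `A` from `q` to `q'`
reading the word `w`, whose cost updates sum up to `n`. -/
inductive Reach (A : CEFA σ k) : A.Q → List σ → (Fin k → ℤ) → A.Q → Prop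
  | nil (q : A.Q) : Reach A q [] 0 q
  | cons {q q' q'' : A.Q} {a : σ} {w : List σ} {η n : Fin k → ℤ} :
      (q, a, q', η) ∈ A.δ → Reach A q' w n q'' → Reach A q (a :: w) (η + n) q''

/-- The cost-enriched language of a CEFA: all pairs `(w, n)` admitting an accepting run. -/
def Lang (A : CEFA σ k) : Set (List σ × (Fin k → ℤ)) :=
  {p | ∃ q₀ qf, q₀ ∈ A.I ∧ qf ∈ A.F ∧ Reach A q₀ p.1 p.2 qf}

end CEFA

/-- A cost-enriched regular language (CERL): a set accepted by some (finite) CEFA. -/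
def IsCERL {σ : Type} {k : ℕ} (L : Set (List σ × (Fin k → ℤ))) : Prop :=
  ∃ A : CEFA σ k, A.IsFinite ∧ A.Lang = L

/-- `OccursAt v w p` : the word `v` occurs in `w` at (0-based) position `p`, i.e. the
factor of `w` of length `|v|` starting at index `p` equals `v` (so `p + |v| ≤ |w|`). -/
def OccursAt {σ : Type} (v w : List σ) (p : ℕ) : Prop :=
  p + v.length ≤ w.length ∧ (w.drop p).take v.length = v


/-! Writing `i = |x|` and `j = |x| + |y|`, the set consists of the pairs
`(x ++ y ++ v ++ r, (|x|, |x| + |y|))` with `x ++ y ++ v ++ r ∈ L` and `v` not occurring in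
`y ++ v.dropLast`. It is therefore a concatenation of four cost-enriched languages (`x` arbitrary
with cost `(1, 1)` per letter, `y` with cost `(0, 1)` per letter, `v`, and `r` arbitrary at cost
`0`) intersected with `L` on the word component, and CERLs are closed under both operations.
The language of admissible `y` is regular by Myhill–Nerode: whether `v` occurs in `x ++ y` only
depends on `y`, on whether `v` occurs in `x`, and on the last `|v|` letters of `x`. -/

namespace CEFA

variable {σ : Type} {k : ℕ}

theorem Reach.map {A B : CEFA σ k} (f : A.Q → B.Q)
    (hf : ∀ {q a q' η}, (q, a, q', η) ∈ A.δ → (f q, a, f q', η) ∈ B.δ)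
    {q q' : A.Q} {w : List σ} {n : Fin k → ℤ} (h : Reach A q w n q') :
    Reach B (f q) w n (f q') := by
  induction h with
  | nil q => exact .nil _
  | cons ht _ ih => exact .cons (hf ht) ih

def lengthSMul (σ : Type) (η : Fin k → ℤ) : CEFA σ k where
  Q := Unit
  δ := Set.univ ×ˢ Set.univ ×ˢ Set.univ ×ˢ {η}
  I := Set.univ
  F := Set.univ

theorem reach_lengthSMul_iff {η : Fin k → ℤ} {q q' : (lengthSMul σ η).Q} {w : List σ}
    {n : Fin k → ℤ} :
    Reach (lengthSMul σ η) q w n q' ↔ n = w.length • η := by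
  constructor
  · intro h
    induction h with
    | nil => simp
    | @cons _ _ _ _ _ η' _ ht _ ih =>
      rw [ih, List.length_cons, succ_nsmul', show η' = η from ht.2.2.2]
  · rintro rfl
    induction w with
    | nil => exact zero_nsmul η ▸ Reach.nil q
    | cons a w ih =>
      rw [List.length_cons, succ_nsmul']
      exact .cons (q' := ()) ⟨trivial, trivial, trivial, rfl⟩ ih

theorem lang_lengthSMul (η : Fin k → ℤ) :
    (lengthSMul σ η).Lang = Set.range fun w => (w, w.length • η) := by
  ext p
  refine ⟨fun ⟨_, _, _, _, h⟩ => ⟨p.1, Prod.ext rfl (reach_lengthSMul_iff.mp h).symm⟩, ?_⟩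
  rintro ⟨w, rfl⟩
  exact ⟨(), (), trivial, trivial, reach_lengthSMul_iff.mpr rfl⟩

theorem isFinite_lengthSMul [Finite σ] (η : Fin k → ℤ) : (lengthSMul σ η).IsFinite :=
  ⟨inferInstanceAs (Finite Unit), Set.finite_univ.prod <| Set.finite_univ.prod <|
    Set.finite_univ.prod <| Set.finite_singleton η⟩

section InterDFA

variable {T : Type}

def interDFA (A : CEFA σ k) (M : DFA σ T) : CEFA σ k where
  Q := A.Q × T
  δ := {t | (t.1.1, t.2.1, t.2.2.1.1, t.2.2.2) ∈ A.δ ∧ t.2.2.1.2 = M.step t.1.2 t.2.1}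
  I := A.I ×ˢ {M.start}
  F := A.F ×ˢ M.accept

theorem reach_interDFA_iff {A : CEFA σ k} {M : DFA σ T} {p p' : (A.interDFA M).Q}
    {w : List σ} {n : Fin k → ℤ} :
    Reach (A.interDFA M) p w n p' ↔ Reach A p.1 w n p'.1 ∧ p'.2 = M.evalFrom p.2 w := by
  constructor
  · intro h
    induction h with
    | nil => exact ⟨.nil _, rfl⟩
    | cons ht _ ih => exact ⟨.cons ht.1 ih.1, by rw [ih.2, ht.2, DFA.evalFrom_cons]⟩
  · obtain ⟨q, s⟩ := p
    obtain ⟨q', s'⟩ := p'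
    rintro ⟨h, rfl⟩
    dsimp only at h ⊢
    induction h generalizing s with
    | nil => exact .nil _
    | cons ht _ ih => exact .cons ⟨ht, rfl⟩ (ih _)

theorem lang_interDFA (A : CEFA σ k) (M : DFA σ T) :
    (A.interDFA M).Lang = A.Lang ∩ Prod.fst ⁻¹' M.accepts := by
  ext ⟨w, n⟩
  constructor
  · rintro ⟨⟨q, s⟩, ⟨q', s'⟩, ⟨hq, rfl : s = M.start⟩, ⟨hq', hs'⟩, h⟩
    obtain ⟨h, rfl⟩ := reach_interDFA_iff.mp h
    exact ⟨⟨q, q', hq, hq', h⟩, hs'⟩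
  · rintro ⟨⟨q, q', hq, hq', h⟩, hw⟩
    exact ⟨(q, M.start), (q', M.eval w), ⟨hq, rfl⟩, ⟨hq', hw⟩, reach_interDFA_iff.mpr ⟨h, rfl⟩⟩

theorem IsFinite.interDFA [Finite T] {A : CEFA σ k} (hA : A.IsFinite) (M : DFA σ T) :
    (A.interDFA M).IsFinite := by
  have := hA.1
  refine ⟨inferInstanceAs (Finite (A.Q × T)), ?_⟩
  refine ((hA.2.prod (Set.finite_univ (α := T))).image
    fun x => ((x.1.1, x.2), x.1.2.1, (x.1.2.2.1, M.step x.2 x.1.2.1), x.1.2.2.2)).subset ?_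
  rintro ⟨⟨q, s⟩, a, ⟨q', s'⟩, η⟩ ⟨ht, hs'⟩
  dsimp only at hs'
  subst hs'
  exact ⟨((q, a, q', η), s), ⟨ht, trivial⟩, rfl⟩

end InterDFA

section Concat

variable {A B : CEFA σ k}

/-- Having no ε-transitions, the concatenation leaves `A` on the last letter of its word by jumping
straight into an initial state of `B`; an empty first word is handled by the initial states. -/
inductive ConcatStep (A B : CEFA σ k) : A.Q ⊕ B.Q → σ → A.Q ⊕ B.Q → (Fin k → ℤ) → Prop
  | left {q a q' η} : (q, a, q', η) ∈ A.δ → ConcatStep A B (.inl q) a (.inl q') η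
  | right {p a p' η} : (p, a, p', η) ∈ B.δ → ConcatStep A B (.inr p) a (.inr p') η
  | jump {q a q' η p} : (q, a, q', η) ∈ A.δ → q' ∈ A.F → p ∈ B.I →
      ConcatStep A B (.inl q) a (.inr p) η

variable (A B) in
def concat : CEFA σ k where
  Q := A.Q ⊕ B.Q
  δ := {t | ConcatStep A B t.1 t.2.1 t.2.2.1 t.2.2.2}
  I := Sum.inl '' A.I ∪ Sum.inr '' {p ∈ B.I | ∃ q ∈ A.I, q ∈ A.F}
  F := Sum.inr '' B.F

theorem Reach.concat_right {p p' : B.Q} {w : List σ} {n : Fin k → ℤ} (h : Reach B p w n p') :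
    Reach (A.concat B) (.inr p) w n (.inr p') :=
  h.map (B := A.concat B) Sum.inr ConcatStep.right

theorem Reach.of_concat_inr {q q' : (A.concat B).Q} {w : List σ} {n : Fin k → ℤ}
    (h : Reach (A.concat B) q w n q') {p : B.Q} (hq : q = .inr p) :
    ∃ p', q' = .inr p' ∧ Reach B p w n p' := by
  induction h generalizing p with
  | nil => exact ⟨p, hq, .nil p⟩
  | cons ht _ ih =>
    subst hq
    obtain _ | ht := ht
    obtain ⟨p', hq', h⟩ := ih rfl
    exact ⟨p', hq', .cons ht h⟩

theorem Reach.of_concat_inl {q q' : (A.concat B).Q} {w : List σ} {n : Fin k → ℤ}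
    (h : Reach (A.concat B) q w n q') {q₀ : A.Q} (hq : q = .inl q₀) {f : B.Q}
    (hf : q' = .inr f) :
    ∃ w₁ w₂ n₁ n₂, w = w₁ ++ w₂ ∧ n = n₁ + n₂ ∧ (∃ q₁ ∈ A.F, Reach A q₀ w₁ n₁ q₁) ∧
      ∃ p ∈ B.I, Reach B p w₂ n₂ f := by
  induction h generalizing q₀ with
  | nil => exact absurd (hq.symm.trans hf) Sum.inl_ne_inr
  | @cons _ _ _ a w η n ht hr ih =>
    subst hq
    obtain ht | _ | ⟨ht, hF, hp⟩ := ht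
    · obtain ⟨w₁, w₂, n₁, n₂, rfl, rfl, ⟨q₁, hq₁, h₁⟩, h₂⟩ := ih rfl hf
      exact ⟨a :: w₁, w₂, η + n₁, n₂, rfl, (add_assoc _ _ _).symm, ⟨q₁, hq₁, .cons ht h₁⟩, h₂⟩
    · obtain ⟨p', hp', h⟩ := hr.of_concat_inr rfl
      obtain rfl := Sum.inr_injective (hp'.symm.trans hf)
      exact ⟨[a], w, η, n, rfl, rfl, ⟨_, hF, add_zero η ▸ .cons ht (.nil _)⟩, _, hp, h⟩

theorem Reach.concat {q q₁ : A.Q} {p f : B.Q} {w₁ w₂ : List σ} {n₁ n₂ : Fin k → ℤ}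
    (h₁ : Reach A q w₁ n₁ q₁) (hq₁ : q₁ ∈ A.F) (hw₁ : w₁ ≠ []) (hp : p ∈ B.I)
    (h₂ : Reach B p w₂ n₂ f) :
    Reach (A.concat B) (.inl q) (w₁ ++ w₂) (n₁ + n₂) (.inr f) := by
  induction h₁ with
  | nil => exact absurd rfl hw₁
  | @cons _ _ _ a w η n ht hr ih =>
    rw [List.cons_append, add_assoc]
    obtain rfl | hw := eq_or_ne w []
    · cases hr
      rw [List.nil_append, zero_add]
      exact .cons (ConcatStep.jump ht hq₁ hp) h₂.concat_right
    · exact .cons (ConcatStep.left ht) (ih hq₁ hw)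

theorem lang_concat :
    (A.concat B).Lang = Set.image2 (fun a b => (a.1 ++ b.1, a.2 + b.2)) A.Lang B.Lang := by
  ext ⟨w, n⟩
  constructor
  · rintro ⟨q, _, hq | ⟨p, ⟨hp, q₀, hq₀, hq₀F⟩, rfl⟩, ⟨f, hf, rfl⟩, h⟩
    · obtain ⟨q, hq, rfl⟩ := hq
      obtain ⟨w₁, w₂, n₁, n₂, rfl, rfl, ⟨q₁, hq₁, h₁⟩, p, hp, h₂⟩ := h.of_concat_inl rfl rfl
      exact ⟨(w₁, n₁), ⟨q, q₁, hq, hq₁, h₁⟩, (w₂, n₂), ⟨p, f, hp, hf, h₂⟩, rfl⟩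
    · obtain ⟨f', hf', h⟩ := h.of_concat_inr rfl
      obtain rfl := Sum.inr_injective hf'
      exact ⟨([], 0), ⟨q₀, q₀, hq₀, hq₀F, .nil _⟩, (w, n), ⟨p, _, hp, hf, h⟩, by simp⟩
  · rintro ⟨⟨w₁, n₁⟩, ⟨q, q₁, hq, hq₁, h₁⟩, ⟨w₂, n₂⟩, ⟨p, f, hp, hf, h₂⟩, he⟩
    obtain ⟨rfl, rfl⟩ := Prod.mk.inj he
    obtain rfl | hw₁ := eq_or_ne w₁ []
    · cases h₁
      refine ⟨.inr p, .inr f, .inr ⟨p, ⟨hp, q, hq, hq₁⟩, rfl⟩, ⟨f, hf, rfl⟩, ?_⟩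
      show Reach _ _ ([] ++ w₂) (0 + n₂) _
      rw [List.nil_append, zero_add]
      exact h₂.concat_right
    · exact ⟨.inl q, .inr f, .inl ⟨q, hq, rfl⟩, ⟨f, hf, rfl⟩, h₁.concat hq₁ hw₁ hp h₂⟩

theorem IsFinite.concat (hA : A.IsFinite) (hB : B.IsFinite) : (A.concat B).IsFinite := by
  have := hA.1
  have := hB.1
  refine ⟨inferInstanceAs (Finite (A.Q ⊕ B.Q)), ?_⟩
  refine (((hA.2.image fun t => (Sum.inl t.1, t.2.1, Sum.inl t.2.2.1, t.2.2.2)).union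
    (hB.2.image fun t => (Sum.inr t.1, t.2.1, Sum.inr t.2.2.1, t.2.2.2))).union
    (hA.2.image2 (fun t (p : B.Q) => (Sum.inl t.1, t.2.1, Sum.inr p, t.2.2.2))
      Set.finite_univ)).subset ?_
  rintro ⟨_, a, _, η⟩ (ht | ht | ⟨ht, -, -⟩)
  · exact .inl (.inl ⟨_, ht, rfl⟩)
  · exact .inl (.inr ⟨_, ht, rfl⟩)
  · exact .inr ⟨_, ht, _, trivial, rfl⟩

end Concat

end CEFA

section IsCERL

variable {σ : Type} {k : ℕ}

theorem isCERL_range_length_smul [Finite σ] (η : Fin k → ℤ) :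
    IsCERL (Set.range fun w : List σ => (w, w.length • η)) :=
  ⟨_, CEFA.isFinite_lengthSMul η, CEFA.lang_lengthSMul η⟩

theorem IsCERL.inter_preimage_fst {S : Set (List σ × (Fin k → ℤ))} (hS : IsCERL S)
    {L : Language σ} (hL : L.IsRegular) : IsCERL (S ∩ Prod.fst ⁻¹' L) := by
  obtain ⟨A, hA, rfl⟩ := hS
  obtain ⟨T, _, M, rfl⟩ := hL
  exact ⟨A.interDFA M, hA.interDFA M, A.lang_interDFA M⟩

theorem isCERL_image_length_smul [Finite σ] {K : Language σ} (hK : K.IsRegular)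
    (η : Fin k → ℤ) : IsCERL ((fun w => (w, w.length • η)) '' K) := by
  convert (isCERL_range_length_smul η).inter_preimage_fst hK using 1
  ext p
  constructor
  · rintro ⟨w, hw, rfl⟩
    exact ⟨⟨w, rfl⟩, hw⟩
  · rintro ⟨⟨w, rfl⟩, hw⟩
    exact ⟨w, hw, rfl⟩

theorem IsCERL.image2_append {S S' : Set (List σ × (Fin k → ℤ))} (hS : IsCERL S)
    (hS' : IsCERL S') : IsCERL (Set.image2 (fun a b => (a.1 ++ b.1, a.2 + b.2)) S S') := by
  obtain ⟨A, hA, rfl⟩ := hS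
  obtain ⟨B, hB, rfl⟩ := hS'
  exact ⟨A.concat B, hA.concat hB, CEFA.lang_concat⟩

end IsCERL

theorem List.IsSuffix.suffix_rtake {α : Type*} {l x : List α} (h : l <:+ x) {n : ℕ}
    (hn : l.length ≤ n) : l <:+ x.rtake n :=
  List.suffix_of_suffix_length_le h (List.drop_suffix _ _) <| by
    simp only [List.rtake, List.length_drop]
    have := h.length_le
    omega

theorem List.infix_append_iff_infix_rtake_append {α : Type*} {v x y : List α}
    (hx : ¬ v <:+: x) : v <:+: x ++ y ↔ v <:+: x.rtake v.length ++ y := by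
  rw [List.infix_append_iff, List.infix_append_iff]
  constructor
  · rintro (h | h | ⟨l₁, l₂, rfl, h₁, h₂⟩)
    · exact absurd h hx
    · exact .inr (.inl h)
    · exact .inr (.inr ⟨l₁, l₂, rfl, h₁.suffix_rtake (by simp), h₂⟩)
  · rintro (h | h | ⟨l₁, l₂, rfl, h₁, h₂⟩)
    · exact .inl (h.trans (List.drop_suffix _ _).isInfix)
    · exact .inr (.inl h)
    · exact .inr (.inr ⟨l₁, l₂, rfl, h₁.trans (List.drop_suffix _ _), h₂⟩)

namespace Language

variable {α : Type*}

theorem isRegular_singleton (v : List α) : ({v} : Language α).IsRegular := by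
  refine .of_finite_range_leftQuotient <|
    (((Set.finite_Iic v.length).image fun m => ({v.drop m} : Language α)).insert 0).subset ?_
  rintro _ ⟨x, rfl⟩
  by_cases hx : x <+: v
  · refine .inr ⟨x.length, hx.length_le, ?_⟩
    ext y
    change y = _ ↔ x ++ y = v
    conv_rhs => rw [← List.prefix_iff_eq_append.mp hx]
    exact List.append_right_inj x |>.symm
  · exact .inl (Set.eq_empty_of_forall_notMem fun y hy => hx ⟨y, hy⟩)

theorem isRegular_setOf_infix [Finite α] (v : List α) :
    Language.IsRegular ({w | v <:+: w} : Language α) := by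
  refine .of_finite_range_leftQuotient <|
    ((List.finite_length_le α v.length).image (leftQuotient {w | v <:+: w})).subset ?_
  rintro _ ⟨x, rfl⟩
  by_cases hx : v <:+: x
  · refine ⟨v, le_refl v.length, ?_⟩
    ext y
    exact iff_of_true List.infix_append_left (List.infix_append_of_infix_left hx)
  · refine ⟨x.rtake v.length, (List.length_drop ..).trans_le (by omega), ?_⟩
    ext y
    exact (List.infix_append_iff_infix_rtake_append hx).symm

theorem IsRegular.preimage_append_right {L : Language α} (hL : L.IsRegular) (u : List α) :
    Language.IsRegular ((· ++ u) ⁻¹' L : Language α) := by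
  refine .of_finite_range_leftQuotient <|
    (hL.finite_range_leftQuotient.image fun K => ((· ++ u) ⁻¹' K : Language α)).subset ?_
  rintro _ ⟨x, rfl⟩
  refine ⟨_, ⟨x, rfl⟩, Set.ext fun y => ?_⟩
  change x ++ (y ++ u) ∈ L ↔ (x ++ y) ++ u ∈ L
  rw [List.append_assoc]

end Language

section Occurrence

variable {σ : Type} {v w : List σ}

theorem occursAt_iff_exists_append {p : ℕ} :
    OccursAt v w p ↔ ∃ s t, w = s ++ v ++ t ∧ s.length = p := by
  constructor
  · rintro ⟨hlen, hv⟩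
    refine ⟨w.take p, w.drop (p + v.length), ?_, by simp; omega⟩
    conv_lhs => rw [← List.take_append_drop p w,
      ← List.take_append_drop v.length (w.drop p), hv, List.drop_drop]
    simp
  · rintro ⟨s, t, rfl, rfl⟩
    simp [OccursAt]

/-- Since `v` itself follows `y`, an occurrence of `v` starting inside `y` lies inside
`y ++ v.dropLast`. -/
theorem exists_occursAt_between_iff_infix (hv : v ≠ []) (x y r : List σ) :
    (∃ q, x.length ≤ q ∧ q < x.length + y.length ∧ OccursAt v (x ++ y ++ v ++ r) q) ↔
      v <:+: y ++ v.dropLast := by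
  obtain ⟨d, a, rfl⟩ : ∃ d a, v = d ++ [a] := ⟨_, _, (List.dropLast_append_getLast hv).symm⟩
  rw [List.dropLast_concat]
  constructor
  · rintro ⟨q, hxq, hqy, hq⟩
    obtain ⟨s, t, he, rfl⟩ := occursAt_iff_exists_append.mp hq
    have hy : y ++ (d ++ [a]) ++ r = s.drop x.length ++ (d ++ [a]) ++ t := by
      simpa [List.drop_append_of_le_length hxq] using congrArg (List.drop x.length) he
    have hpre : s.drop x.length ++ (d ++ [a]) <+: y ++ d :=
      List.prefix_of_prefix_length_le ⟨t, hy.symm⟩ ⟨[a] ++ r, by simp⟩ (by simp; omega)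
    exact List.infix_append_right.trans hpre.isInfix
  · rintro ⟨s, t, he⟩
    have hlen := congrArg List.length he
    simp only [List.length_append, List.length_singleton] at hlen
    refine ⟨x.length + s.length, by omega, by omega, occursAt_iff_exists_append.mpr
      ⟨x ++ s, t ++ [a] ++ r, ?_, by simp⟩⟩
    simp only [← List.append_assoc] at he ⊢
    rw [List.append_assoc x y d, ← he]
    simp

theorem firstOccurrence_iff_exists_append (hv : v ≠ []) {i j : ℕ} :
    (i ≤ j ∧ OccursAt v w j ∧ ∀ q, i ≤ q → q < j → ¬ OccursAt v w q) ↔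
      ∃ x y r, w = x ++ y ++ v ++ r ∧ ¬ v <:+: y ++ v.dropLast ∧
        x.length = i ∧ x.length + y.length = j := by
  constructor
  · rintro ⟨hij, hj, hfirst⟩
    obtain ⟨s, r, rfl, rfl⟩ := occursAt_iff_exists_append.mp hj
    refine ⟨s.take i, s.drop i, r, by rw [List.take_append_drop], fun h => ?_,
      by simp [hij], by simp; omega⟩
    obtain ⟨q, hiq, hqj, hq⟩ := (exists_occursAt_between_iff_infix hv _ _ r).mpr h
    rw [List.take_append_drop] at hq
    simp only [List.length_take, List.length_drop] at hiq hqj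
    exact hfirst q (by omega) (by omega) hq
  · rintro ⟨x, y, r, rfl, hy, rfl, rfl⟩
    exact ⟨by omega, occursAt_iff_exists_append.mpr ⟨x ++ y, r, rfl, by simp⟩,
      fun q hxq hqy hq => hy ((exists_occursAt_between_iff_infix hv x y r).mp ⟨q, hxq, hqy, hq⟩)⟩

end Occurrence

/-- for every regular language `L` and every nonempty word `v`, the set of
triples `(w, (i, j))` with `w ∈ L`, `0 ≤ i ≤ j`, `v` occurring in `w` at position `j`,
and `v` not occurring at any position `p` with `i ≤ p < j`, is a CERL with two registers. -/
theorem indexof_graph_isCERL {σ : Type} [Fintype σ] (L : Language σ) (hL : L.IsRegular)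
    (v : List σ) (hv : v ≠ []) :
    IsCERL {p : List σ × (Fin 2 → ℤ) | p.1 ∈ L ∧ ∃ i j : ℕ,
      p.2 = ![(i : ℤ), (j : ℤ)] ∧ i ≤ j ∧ OccursAt v p.1 j ∧
      ∀ q : ℕ, i ≤ q → q < j → ¬ OccursAt v p.1 q} := by
  set Y : Language σ := (· ++ v.dropLast) ⁻¹' {w | v <:+: w}ᶜ
  have hY : Y.IsRegular := (Language.isRegular_setOf_infix v).compl.preimage_append_right _
  have hcost : ∀ x y r : List σ, x.length • ![1, 1] + y.length • ![0, 1] + v.length • 0 +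
      r.length • 0 = ![(x.length : ℤ), ((x.length + y.length : ℕ) : ℤ)] := by
    intro x y r
    ext i
    fin_cases i <;> simp
  convert ((((isCERL_range_length_smul ![1, 1]).image2_append
    (isCERL_image_length_smul hY ![0, 1])).image2_append
    (isCERL_image_length_smul (Language.isRegular_singleton v) 0)).image2_append
    (isCERL_range_length_smul 0)).inter_preimage_fst hL using 1
  ext p
  constructor
  · rintro ⟨hw, i, j, hp, hfirst⟩
    obtain ⟨x, y, r, hp', hy, rfl, rfl⟩ := (firstOccurrence_iff_exists_append hv).mp hfirst
    refine ⟨?_, hw⟩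
    rw [show p = (x ++ y ++ v ++ r, _) from Prod.ext hp' (hp.trans (hcost x y r).symm)]
    exact ⟨_, ⟨_, ⟨_, ⟨x, rfl⟩, _, ⟨y, hy, rfl⟩, rfl⟩, _, ⟨v, rfl, rfl⟩, rfl⟩, _, ⟨r, rfl⟩, rfl⟩
  · rintro ⟨⟨_, ⟨_, ⟨_, ⟨x, rfl⟩, _, ⟨y, hy, rfl⟩, rfl⟩, _, ⟨u, hu, rfl⟩, rfl⟩, _, ⟨r, rfl⟩,
      rfl⟩, hw⟩
    subst u
    exact ⟨hw, x.length, x.length + y.length, hcost x y r,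
      (firstOccurrence_iff_exists_append hv).mpr ⟨x, y, r, rfl, hy, rfl, rfl⟩⟩
end

section
/- Let T be a nondeterministic finite transducer over Σ and let A be a CEFA over Σ with k cost registers. Then the set {(w, n) ∈ Σ* × ℤ^k : there exists u ∈ Σ* with (w, u) ∈ T(T) and (u, n) ∈ L(A)} is a cost-enriched regular language with k cost registers; that is, the cost-enriched pre-image of L(A) under the transduction defined by T is accepted by a single CEFA (one whose state set is the product of the state sets of T and A, and whose transitions summarise, for each transducer transition with output word u, the cost updates of A along runs over u). -/
/-- A nondeterministic finite transducer (NFT) over `σ`: transitions `(q, a, q', u)`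
read the letter `a` and output the word `u`. -/
structure NFT (σ : Type) where
  Q : Type
  δ : Set (Q × σ × Q × List σ)
  I : Set Q
  F : Set Q

namespace NFT

variable {σ : Type}

/-- An NFT is finite if its state set and transition set are finite. -/
def IsFinite (T : NFT σ) : Prop := Finite T.Q ∧ T.δ.Finite

/-- `Run T q w out q'`: a sequence of transitions of `T` from `q` to `q'` reading `w`,
whose outputs concatenate to `out`. -/
inductive Run (T : NFT σ) : T.Q → List σ → List σ → T.Q → Prop
  | nil (q : T.Q) : Run T q [] [] q
  | cons {q q' q'' : T.Q} {a : σ} {w u out : List σ} :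
      (q, a, q', u) ∈ T.δ → Run T q' w out q'' → Run T q (a :: w) (u ++ out) q''

/-- The transduction defined by `T`: all pairs `(w, u)` such that some accepting run of `T`
on `w` has output `u`. -/
def Trans (T : NFT σ) : Set (List σ × List σ) :=
  {p | ∃ q₀ qf, q₀ ∈ T.I ∧ qf ∈ T.F ∧ Run T q₀ p.1 p.2 qf}

end NFT

namespace CEFA

variable {σ : Type} {k : ℕ} {A : CEFA σ k}

theorem Reach.append {q q' q'' : A.Q} {u v : List σ} {m n : Fin k → ℤ}
    (h₁ : A.Reach q u m q') (h₂ : A.Reach q' v n q'') :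
    A.Reach q (u ++ v) (m + n) q'' := by
  induction h₁ with
  | nil => simpa using h₂
  | cons ht _ ih => simpa [add_assoc] using Reach.cons ht (ih h₂)

theorem Reach.exists_of_append {u v : List σ} {q q'' : A.Q} {n : Fin k → ℤ}
    (h : A.Reach q (u ++ v) n q'') :
    ∃ q' m₁ m₂, A.Reach q u m₁ q' ∧ A.Reach q' v m₂ q'' ∧ n = m₁ + m₂ := by
  induction u generalizing q n with
  | nil => exact ⟨q, 0, n, Reach.nil q, h, (zero_add n).symm⟩
  | cons a u ih =>
    cases h with
    | cons ht hr =>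
      obtain ⟨q', m₁, m₂, h₁, h₂, rfl⟩ := ih hr
      exact ⟨q', _, m₂, Reach.cons ht h₁, h₂, (add_assoc _ _ _).symm⟩

theorem IsFinite.finite_setOf_reach (hA : A.IsFinite) (u : List σ) :
    {t : A.Q × (Fin k → ℤ) × A.Q | A.Reach t.1 u t.2.1 t.2.2}.Finite := by
  have := hA.1
  induction u with
  | nil =>
    refine (Set.finite_range fun q : A.Q => (q, (0 : Fin k → ℤ), q)).subset ?_
    rintro ⟨q, n, q'⟩ ⟨⟩
    exact ⟨q, rfl⟩
  | cons a u ih =>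
    refine ((hA.2.prod ih).image fun x => (x.1.1, x.1.2.2.2 + x.2.2.1, x.2.2.2)).subset ?_
    rintro ⟨q, n, q''⟩ h
    cases h with
    | @cons _ q' _ _ _ η m ht hr =>
      exact ⟨((q, a, q', η), (q', m, q'')), ⟨ht, hr⟩, rfl⟩

/-- Product construction: a transition of `T` with output `u` is combined with every run of
`A` over `u`, whose total cost becomes the update of the new transition. -/
def preimage (A : CEFA σ k) (T : NFT σ) : CEFA σ k where
  Q := T.Q × A.Q
  δ := {x | ∃ u, (x.1.1, x.2.1, x.2.2.1.1, u) ∈ T.δ ∧ A.Reach x.1.2 u x.2.2.2 x.2.2.1.2}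
  I := T.I ×ˢ A.I
  F := T.F ×ˢ A.F

variable {T : NFT σ}

theorem reach_preimage_of_run {q q' : T.Q} {w u : List σ} (hT : T.Run q w u q')
    {p p' : A.Q} {n : Fin k → ℤ} (hA : A.Reach p u n p') :
    (A.preimage T).Reach (q, p) w n (q', p') := by
  induction hT generalizing p n with
  | nil =>
    cases hA
    exact Reach.nil _
  | @cons _ _ _ _ _ u out ht _ ih =>
    obtain ⟨p₁, m₁, m₂, h₁, h₂, rfl⟩ := Reach.exists_of_append (v := out) hA
    exact Reach.cons ⟨u, ht, h₁⟩ (ih h₂)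

theorem exists_run_of_reach_preimage {s s' : (A.preimage T).Q} {w : List σ} {n : Fin k → ℤ}
    (h : (A.preimage T).Reach s w n s') :
    ∃ u, T.Run s.1 w u s'.1 ∧ A.Reach s.2 u n s'.2 := by
  induction h with
  | nil => exact ⟨[], NFT.Run.nil _, Reach.nil _⟩
  | cons ht _ ih =>
    obtain ⟨u₀, hT₀, hA₀⟩ := ht
    obtain ⟨u, hT, hA⟩ := ih
    exact ⟨u₀ ++ u, NFT.Run.cons hT₀ hT, hA₀.append hA⟩

theorem lang_preimage :
    (A.preimage T).Lang = {p | ∃ u, (p.1, u) ∈ T.Trans ∧ (u, p.2) ∈ A.Lang} := by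
  ext ⟨w, n⟩
  constructor
  · rintro ⟨⟨q₀, p₀⟩, ⟨q_f, p_f⟩, ⟨hq₀, hp₀⟩, ⟨hq_f, hp_f⟩, h⟩
    obtain ⟨u, hT, hA⟩ := exists_run_of_reach_preimage h
    exact ⟨u, ⟨q₀, q_f, hq₀, hq_f, hT⟩, ⟨p₀, p_f, hp₀, hp_f, hA⟩⟩
  · rintro ⟨u, ⟨q₀, q_f, hq₀, hq_f, hT⟩, ⟨p₀, p_f, hp₀, hp_f, hA⟩⟩
    exact ⟨(q₀, p₀), (q_f, p_f), ⟨hq₀, hp₀⟩, ⟨hq_f, hp_f⟩, reach_preimage_of_run hT hA⟩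

theorem IsFinite.preimage (hA : A.IsFinite) (hT : T.IsFinite) : (A.preimage T).IsFinite := by
  have := hA.1
  have := hT.1
  refine ⟨inferInstanceAs (Finite (T.Q × A.Q)), ?_⟩
  refine (hT.2.biUnion fun t _ => (hA.finite_setOf_reach t.2.2.2).image
    fun y => ((t.1, y.1), t.2.1, (t.2.2.1, y.2.2), y.2.1)).subset ?_
  rintro ⟨⟨q, p⟩, a, ⟨q', p'⟩, η⟩ ⟨u, ht, hr⟩
  exact Set.mem_biUnion ht ⟨(p, η, p'), hr, rfl⟩

end CEFA

theorem nft_preimage_isCERL_general {σ : Type} {k : ℕ}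
    (T : NFT σ) (hT : T.IsFinite) (A : CEFA σ k) (hA : A.IsFinite) :
    IsCERL {p : List σ × (Fin k → ℤ) |
      ∃ u : List σ, (p.1, u) ∈ T.Trans ∧ (u, p.2) ∈ A.Lang} :=
  ⟨A.preimage T, hA.preimage hT, CEFA.lang_preimage⟩

/-- the cost-enriched pre-image of the language of a CEFA `A` under the
transduction of an NFT `T`, i.e. `{(w, n) : ∃ u, (w, u) ∈ T(T) ∧ (u, n) ∈ L(A)}`,
is a cost-enriched regular language with the same number of registers. -/
theorem nft_preimage_isCERL {σ : Type} [Fintype σ] {k : ℕ}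
    (T : NFT σ) (hT : T.IsFinite) (A : CEFA σ k) (hA : A.IsFinite) :
    IsCERL {p : List σ × (Fin k → ℤ) |
      ∃ u : List σ, (p.1, u) ∈ T.Trans ∧ (u, p.2) ∈ A.Lang} :=
  nft_preimage_isCERL_general T hT A hA
end

section
/- Let E ⊆ Σ* be a regular language with ε ∉ E, let u ∈ Σ*, and let A be a CEFA over Σ with k cost registers. Then the set {(w, n) ∈ Σ* × ℤ^k : (replaceAll_{E,u}(w), n) ∈ L(A)}, the cost-enriched pre-image of L(A) under the leftmost-longest replaceAll function replaceAll_{E,u}, is a cost-enriched regular language with k cost registers. -/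
/-- The graph of the leftmost-longest `replaceAll` function replacing occurrences of the
language `E` (with `ε ∉ E`) by the word `u`:
* if no factor of `w` belongs to `E`, then `w` is mapped to itself;
* otherwise `w = w1 ++ m ++ w2` where `w1` is the shortest prefix of `w` such that some
  word of `E` is a prefix of the remaining suffix, `m` is the longest prefix of that
  suffix belonging to `E`, and `w` is mapped to `w1 ++ u ++ replaceAll(w2)`. -/
inductive ReplaceAll {σ : Type} (E : Set (List σ)) (u : List σ) : List σ → List σ → Prop
  | noMatch {w : List σ} (h : ∀ w1 m w2, w = w1 ++ m ++ w2 → m ∉ E) :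
      ReplaceAll E u w w
  | step {w1 m w2 r : List σ} (hm : m ∈ E)
      (hleftmost : ∀ w1' m' w2', w1 ++ m ++ w2 = w1' ++ m' ++ w2' →
        w1'.length < w1.length → m' ∉ E)
      (hlongest : ∀ m' w2', m ++ w2 = m' ++ w2' → m.length < m'.length → m' ∉ E)
      (hrec : ReplaceAll E u w2 r) :
      ReplaceAll E u (w1 ++ m ++ w2) (w1 ++ u ++ r)

/-!
Reading `w`, a product of `A` with a DFA `M` for `E` either copies a letter to `A`, or guesses that
a leftmost-longest match starts here, feeds `u` to `A` at once and follows the match in `M` until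
it guesses that the match ends. The guesses are checked with a set `S` of states of `M`: a match
attempt is started at every copied position (no earlier match is skipped) and the state reached at
the end of each match is kept (no longer match exists), and the run is blocked as soon as one of
them becomes accepting. Since `S ⊆ QD`, the product is finite; its costs are those of transitions
of `A` or of the finitely many runs of `A` on `u`. Leftmost-longest replacement unfolds letter by
letter, so the product is proved correct by induction on the word, one transition at a time.
-/

open CEFA

variable {σ : Type} {k : ℕ}

namespace CEFA

variable {A : CEFA σ k}

theorem reach_nil_iff {q q' : A.Q} {n : Fin k → ℤ} :
    A.Reach q [] n q' ↔ n = 0 ∧ q' = q := by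
  constructor
  · rintro ⟨⟩
    exact ⟨rfl, rfl⟩
  · rintro ⟨rfl, rfl⟩
    exact .nil _

theorem reach_cons_iff {q q'' : A.Q} {a : σ} {w : List σ} {n : Fin k → ℤ} :
    A.Reach q (a :: w) n q'' ↔
      ∃ q' η n', (q, a, q', η) ∈ A.δ ∧ A.Reach q' w n' q'' ∧ n = η + n' := by
  constructor
  · intro h
    cases h with
    | cons ht hr => exact ⟨_, _, _, ht, hr, rfl⟩
  · rintro ⟨q', η, n', ht, hr, rfl⟩
    exact .cons ht hr

theorem reach_append_iff {q q'' : A.Q} {x y : List σ} {n : Fin k → ℤ} :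
    A.Reach q (x ++ y) n q'' ↔
      ∃ q' n₁ n₂, A.Reach q x n₁ q' ∧ A.Reach q' y n₂ q'' ∧ n = n₁ + n₂ := by
  induction x generalizing q n with
  | nil => simp [reach_nil_iff]
  | cons a x ih =>
    simp only [List.cons_append, reach_cons_iff, ih]
    constructor
    · rintro ⟨q₁, η, _, ht, ⟨q', n₁, n₂, h₁, h₂, rfl⟩, rfl⟩
      exact ⟨q', η + n₁, n₂, ⟨q₁, η, n₁, ht, h₁, rfl⟩, h₂, (add_assoc η n₁ n₂).symm⟩
    · rintro ⟨q', _, n₂, ⟨q₁, η, n₁, ht, h₁, rfl⟩, h₂, rfl⟩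
      exact ⟨q₁, η, n₁ + n₂, ht, ⟨q', n₁, n₂, h₁, h₂, rfl⟩, add_assoc _ _ _⟩

theorem finite_reach_costs (hδ : A.δ.Finite) (w : List σ) :
    {n | ∃ q q', A.Reach q w n q'}.Finite := by
  induction w with
  | nil =>
    refine (Set.finite_singleton 0).subset ?_
    rintro n ⟨q, q', h⟩
    exact (reach_nil_iff.1 h).1
  | cons a w ih =>
    refine ((hδ.image (·.2.2.2)).image2 (· + ·) ih).subset ?_
    rintro _ ⟨q, q'', h⟩
    obtain ⟨q', η, n', ht, hr, rfl⟩ := reach_cons_iff.1 h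
    exact Set.mem_image2_of_mem ⟨_, ht, rfl⟩ ⟨_, _, hr⟩

end CEFA

def NoExtensionIn (E : Set (List σ)) (m w : List σ) : Prop :=
  ∀ p, p <+: w → p ≠ [] → m ++ p ∉ E

namespace ReplaceAll

variable {E : Set (List σ)} {u : List σ}

theorem nil_nil (hε : [] ∉ E) : ReplaceAll E u [] [] :=
  noMatch fun w₁ m w₂ h => by
    obtain ⟨-, rfl, -⟩ : w₁ = [] ∧ m = [] ∧ w₂ = [] := by simpa using h.symm
    exact hε

theorem cons (hε : [] ∉ E) {a : σ} {w r : List σ} (ha : NoExtensionIn E [] (a :: w))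
    (h : ReplaceAll E u w r) : ReplaceAll E u (a :: w) (a :: r) := by
  have head : ∀ m' w', a :: w = m' ++ w' → m' ∉ E := by
    intro m' w' hw hm'
    rcases eq_or_ne m' [] with rfl | hne
    · exact hε hm'
    · exact ha m' ⟨w', hw.symm⟩ hne hm'
  cases h with
  | noMatch hno =>
    refine noMatch fun w₁' m' w₂' hw => ?_
    cases w₁' with
    | nil => exact head m' w₂' (by simpa using hw)
    | cons b w₁' => exact hno w₁' m' w₂' (List.cons.inj hw).2
  | step hm hleft hlong hrec =>
    refine step (w1 := a :: _) hm (fun w₁' m' w₂' hw hlt => ?_) hlong hrec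
    cases w₁' with
    | nil => exact head m' w₂' (by simpa using hw)
    | cons b w₁' => exact hleft w₁' m' w₂' (List.cons.inj hw).2 (by simpa using hlt)

theorem append_of_noExtensionIn {m w r : List σ} (hm : m ∈ E) (hmax : NoExtensionIn E m w)
    (h : ReplaceAll E u w r) : ReplaceAll E u (m ++ w) (u ++ r) := by
  have hlong : ∀ m' w', m ++ w = m' ++ w' → m.length < m'.length → m' ∉ E := by
    intro m' w' hw hlt
    obtain ⟨p, rfl, rfl⟩ | ⟨c, rfl, -⟩ := List.append_eq_append_iff.1 hw
    · exact hmax p ⟨w', rfl⟩ (by rintro rfl; simp at hlt)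
    · simp at hlt
  simpa using step (w1 := []) hm (fun _ _ _ _ hlt => by simp at hlt) hlong h

theorem letter_induction {P : List σ → List σ → Prop} (nil : P [] [])
    (cons : ∀ a w r, NoExtensionIn E [] (a :: w) → P w r → P (a :: w) (a :: r))
    (append : ∀ m w r, m ∈ E → NoExtensionIn E m w → P w r → P (m ++ w) (u ++ r))
    {w r : List σ} (h : ReplaceAll E u w r) : P w r := by
  induction h with
  | @noMatch w hno =>
    induction w with
    | nil => exact nil
    | cons a w ih =>
      exact cons a w w (fun p ⟨s, hs⟩ _ => hno [] p s (by simp [hs]))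
        (ih fun w₁ m w₂ hw => hno (a :: w₁) m w₂ (by simp [hw]))
  | @step w₁ m w₂ r hm hleft hlong _ ih =>
    have hmax : NoExtensionIn E m w₂ := fun p ⟨s, hs⟩ hp =>
      hlong (m ++ p) s (by simp [← hs]) (by simp [List.length_pos_iff.2 hp])
    induction w₁ with
    | nil => exact append m w₂ r hm hmax ih
    | cons a w₁ ih₁ =>
      exact cons a _ _ (fun p ⟨s, hs⟩ _ => hleft [] p s (by simp [hs]) (by simp))
        (ih₁ fun w₁' m' w₂' hw hlt =>
          hleft (a :: w₁') m' w₂' (by simp [hw]) (by simpa using hlt))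

end ReplaceAll

section NeverAccepts

variable {QD : Type}

def NeverAccepts (M : DFA σ QD) (d : QD) (w : List σ) : Prop :=
  ∀ p, p <+: w → p ≠ [] → M.evalFrom d p ∉ M.accept

variable {M : DFA σ QD}

theorem neverAccepts_nil {d : QD} : NeverAccepts M d [] := fun _ hp hne =>
  absurd (List.prefix_nil.1 hp) hne

theorem neverAccepts_cons_iff {d : QD} {a : σ} {w : List σ} :
    NeverAccepts M d (a :: w) ↔ M.step d a ∉ M.accept ∧ NeverAccepts M (M.step d a) w := by
  constructor
  · intro h
    exact ⟨h [a] (by simp) (by simp), fun p hp _ => h (a :: p) (by simpa using hp) (by simp)⟩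
  · rintro ⟨ha, hw⟩ p hp hne
    obtain rfl | ⟨p, rfl, hpw⟩ := List.prefix_cons_iff.1 hp
    · exact absurd rfl hne
    rcases eq_or_ne p [] with rfl | hne'
    · exact ha
    · exact hw p hpw hne'

theorem neverAccepts_eval_iff {m w : List σ} :
    NeverAccepts M (M.eval m) w ↔ NoExtensionIn M.accepts m w := by
  simp only [NeverAccepts, NoExtensionIn, DFA.eval, ← DFA.evalFrom_of_append]
  rfl

theorem neverAccepts_image_step {S : Set QD} {a : σ} {w : List σ}
    (h : ∀ d ∈ S, NeverAccepts M d (a :: w)) :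
    Disjoint ((M.step · a) '' S) M.accept ∧
      ∀ d ∈ (M.step · a) '' S, NeverAccepts M d w := by
  simp only [neverAccepts_cons_iff] at h
  refine ⟨Set.disjoint_left.2 ?_, ?_⟩ <;> rintro _ ⟨d, hd, rfl⟩
  exacts [(h d hd).1, (h d hd).2]

end NeverAccepts

section Preimage

variable {QD : Type} (M : DFA σ QD) (A : CEFA σ k) (u : List σ)

/-- In a state `(q, S, o)` of `preimageCEFA`, `q` is the state of `A`, `o = some d` while a
match is read (with `M` in state `d`), and `S` holds the states of `M` on the match attempts that
must never succeed. -/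
inductive PreimageStep :
    A.Q × Set QD × Option QD → σ → A.Q × Set QD × Option QD → (Fin k → ℤ) → Prop
  | copy {q q' : A.Q} {S : Set QD} {a : σ} {η : Fin k → ℤ} :
      (q, a, q', η) ∈ A.δ → Disjoint ((M.step · a) '' insert M.start S) M.accept →
      PreimageStep (q, S, none) a (q', (M.step · a) '' insert M.start S, none) η
  | enter {q q' : A.Q} {S : Set QD} {a : σ} {c : Fin k → ℤ} :
      A.Reach q u c q' → Disjoint ((M.step · a) '' S) M.accept →
      PreimageStep (q, S, none) a (q', (M.step · a) '' S, some (M.step M.start a)) c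
  | extend {q : A.Q} {S : Set QD} {d : QD} {a : σ} :
      Disjoint ((M.step · a) '' S) M.accept →
      PreimageStep (q, S, some d) a (q, (M.step · a) '' S, some (M.step d a)) 0
  | close {q : A.Q} {S : Set QD} {d : QD} {a : σ} {s : A.Q × Set QD × Option QD}
      {η : Fin k → ℤ} :
      d ∈ M.accept → PreimageStep (q, insert d S, none) a s η →
        PreimageStep (q, S, some d) a s η

def preimageCEFA : CEFA σ k where
  Q := A.Q × Set QD × Option QD
  δ := {t | PreimageStep M A u t.1 t.2.1 t.2.2.1 t.2.2.2}
  I := {s | s.1 ∈ A.I ∧ s.2 = (∅, none)}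
  F := {s | s.1 ∈ A.F ∧ ∀ d ∈ s.2.2, d ∈ M.accept}

local notation "𝒫" => preimageCEFA M A u

namespace PreimageStep

variable {M A u} {s s' : A.Q × Set QD × Option QD} {a : σ} {η : Fin k → ℤ}

theorem mapsTo_and_disjoint (h : PreimageStep M A u s a s' η) :
    Set.MapsTo (M.step · a) s.2.1 s'.2.1 ∧ Disjoint s'.2.1 M.accept := by
  induction h with
  | copy _ hdisj => exact ⟨fun d hd => ⟨d, Set.mem_insert_of_mem _ hd, rfl⟩, hdisj⟩
  | enter _ hdisj => exact ⟨Set.mapsTo_image _ _, hdisj⟩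
  | extend hdisj => exact ⟨Set.mapsTo_image _ _, hdisj⟩
  | close _ _ ih => exact ⟨ih.1.mono_left (Set.subset_insert _ _), ih.2⟩

theorem cost_mem (h : PreimageStep M A u s a s' η) :
    η ∈ insert 0 ((·.2.2.2) '' A.δ ∪ {c | ∃ q q', A.Reach q u c q'}) := by
  induction h with
  | copy ht _ => exact Or.inr (Or.inl ⟨_, ht, rfl⟩)
  | enter hu _ => exact Or.inr (Or.inr ⟨_, _, hu⟩)
  | extend _ => exact Or.inl rfl
  | close _ _ ih => exact ih

end PreimageStep

theorem preimageCEFA_isFinite [Finite σ] [Finite QD] (hA : A.IsFinite) : (𝒫).IsFinite := by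
  obtain ⟨hQ, hδ⟩ := hA
  have : Finite (𝒫).Q := inferInstanceAs (Finite (A.Q × Set QD × Option QD))
  refine ⟨this, (Set.finite_univ.prod (Set.finite_univ.prod (Set.finite_univ.prod
    (((hδ.image (·.2.2.2)).union (finite_reach_costs hδ u)).insert 0)))).subset ?_⟩
  rintro ⟨s, a, s', η⟩ h
  exact ⟨trivial, trivial, trivial, PreimageStep.cost_mem h⟩

variable {M A u}

theorem neverAccepts_of_reach {s s' : (𝒫).Q} {w : List σ} {n : Fin k → ℤ}
    (h : (𝒫).Reach s w n s') : ∀ d ∈ s.2.1, NeverAccepts M d w := by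
  induction h with
  | nil => exact fun d _ => neverAccepts_nil
  | cons ht _ ih =>
    obtain ⟨hmaps, hdisj⟩ := PreimageStep.mapsTo_and_disjoint ht
    exact fun d hd =>
      neverAccepts_cons_iff.2 ⟨Set.disjoint_left.1 hdisj (hmaps hd), ih _ (hmaps hd)⟩

theorem reach_extend (q : A.Q) {w : List σ} : ∀ (m : List σ) {S : Set QD} (d : QD),
    (∀ d ∈ S, NeverAccepts M d (m ++ w)) → ∃ S',
      (𝒫).Reach (q, S, some d) m 0 (q, S', some (M.evalFrom d m)) ∧
        ∀ d ∈ S', NeverAccepts M d w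
  | [], S, _, hS => ⟨S, .nil _, hS⟩
  | a :: m, _, d, hS =>
    have ⟨hdisj, hS'⟩ := neverAccepts_image_step hS
    have ⟨S', hrun, hS''⟩ := reach_extend q m (M.step d a) hS'
    ⟨S', by simpa using Reach.cons (A := 𝒫) (PreimageStep.extend hdisj) hrun, hS''⟩

theorem reach_close {q : A.Q} {S : Set QD} {d : QD} (hd : d ∈ M.accept) {w : List σ}
    {n : Fin k → ℤ} {s : (𝒫).Q} (h : (𝒫).Reach (q, insert d S, none) w n s)
    (hs : s ∈ (𝒫).F) : ∃ s' ∈ (𝒫).F, (𝒫).Reach (q, S, some d) w n s' := by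
  cases w with
  | nil =>
    obtain ⟨rfl, rfl⟩ := reach_nil_iff.1 h
    exact ⟨(q, S, some d), ⟨hs.1, fun d' hd' => Option.mem_some_iff.1 hd' ▸ hd⟩, .nil _⟩
  | cons a w =>
    obtain ⟨s₁, η, n', ht, hr, rfl⟩ := reach_cons_iff.1 h
    exact ⟨s, hs, .cons (PreimageStep.close hd ht) hr⟩

theorem reach_of_replaceAll (hε : [] ∉ M.accepts) {w r : List σ}
    (h : ReplaceAll M.accepts u w r) {q qf : A.Q} {n : Fin k → ℤ} {S : Set QD}
    (hr : A.Reach q r n qf) (hqf : qf ∈ A.F) (hS : ∀ d ∈ S, NeverAccepts M d w) :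
    ∃ s ∈ (𝒫).F, (𝒫).Reach (q, S, none) w n s := by
  refine ReplaceAll.letter_induction (P := fun w r => ∀ {q qf n S},
      A.Reach q r n qf → qf ∈ A.F → (∀ d ∈ S, NeverAccepts M d w) →
        ∃ s ∈ (𝒫).F, (𝒫).Reach (q, S, none) w n s)
    ?_ ?_ ?_ h hr hqf hS
  · intro q qf n S hr hqf _
    obtain ⟨rfl, rfl⟩ := reach_nil_iff.1 hr
    exact ⟨_, ⟨hqf, fun _ h => absurd h (Option.not_mem_none _)⟩, .nil _⟩
  · intro a w r ha ih q qf n S hr hqf hS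
    obtain ⟨q', η, n', ht, hr', rfl⟩ := reach_cons_iff.1 hr
    have hstart : NeverAccepts M M.start (a :: w) := neverAccepts_eval_iff (m := []).2 ha
    obtain ⟨hdisj, hS'⟩ := neverAccepts_image_step (Set.forall_mem_insert.2 ⟨hstart, hS⟩)
    obtain ⟨s, hs, hrun⟩ := ih hr' hqf hS'
    exact ⟨s, hs, .cons (A := 𝒫) (PreimageStep.copy ht hdisj) hrun⟩
  · intro m w r hm hmax ih q qf n S hr hqf hS
    obtain ⟨q', c, n', hu, hr', rfl⟩ := reach_append_iff.1 hr
    obtain _ | ⟨a, m⟩ := m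
    · exact absurd hm hε
    obtain ⟨hdisj, hS₁⟩ := neverAccepts_image_step hS
    obtain ⟨S₂, hmatch, hS₂⟩ := reach_extend q' m (M.step M.start a) hS₁
    obtain ⟨s, hs, hrun⟩ :=
      ih hr' hqf (Set.forall_mem_insert.2 ⟨neverAccepts_eval_iff.2 hmax, hS₂⟩)
    obtain ⟨s', hs', hrun'⟩ := reach_close hm hrun hs
    refine ⟨s', hs', ?_⟩
    simpa using reach_append_iff.2
      ⟨_, _, _, .cons (A := 𝒫) (PreimageStep.enter hu hdisj) hmatch, hrun', rfl⟩

variable (M A u)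

def CopySound (w : List σ) : Prop :=
  ∀ ⦃q : A.Q⦄ ⦃S : Set QD⦄ ⦃n : Fin k → ℤ⦄ ⦃s : (𝒫).Q⦄,
    (𝒫).Reach (q, S, none) w n s → s ∈ (𝒫).F →
      ∃ r, ReplaceAll M.accepts u w r ∧ ∃ qf ∈ A.F, A.Reach q r n qf

/-- Here `m` is the part of the current match read so far, and `A` has already read `u`. -/
def MatchSound (w : List σ) : Prop :=
  ∀ ⦃q : A.Q⦄ ⦃S : Set QD⦄ ⦃d : QD⦄ ⦃n : Fin k → ℤ⦄ ⦃s : (𝒫).Q⦄,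
    (𝒫).Reach (q, S, some d) w n s → s ∈ (𝒫).F → ∀ m, M.eval m = d →
      ∃ r, ReplaceAll M.accepts u (m ++ w) (u ++ r) ∧ ∃ qf ∈ A.F, A.Reach q r n qf

variable {M A u}

theorem copySound_nil (hε : [] ∉ M.accepts) : CopySound M A u [] := by
  intro q S n s h hs
  obtain ⟨rfl, rfl⟩ := reach_nil_iff.1 h
  exact ⟨[], .nil_nil hε, _, hs.1, .nil _⟩

theorem matchSound_nil (hε : [] ∉ M.accepts) : MatchSound M A u [] := by
  intro q S d n s h hs m hm
  obtain ⟨rfl, rfl⟩ := reach_nil_iff.1 h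
  have hmE : m ∈ M.accepts := by
    rw [DFA.mem_accepts, hm]
    exact hs.2 d rfl
  have hmax : NoExtensionIn M.accepts m [] := neverAccepts_eval_iff.1 neverAccepts_nil
  exact ⟨[], by simpa using (ReplaceAll.nil_nil hε).append_of_noExtensionIn hmE hmax,
    _, hs.1, .nil _⟩

theorem copySound_cons (hε : [] ∉ M.accepts) {a : σ} {w : List σ}
    (hcopy : CopySound M A u w) (hmatch : MatchSound M A u w) :
    CopySound M A u (a :: w) := by
  intro q S n s h hs
  obtain ⟨s₁, η, n', ht, hr, rfl⟩ := reach_cons_iff.1 h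
  replace ht : PreimageStep M A u (q, S, none) a s₁ η := ht
  cases ht with
  | copy hδ hdisj =>
    obtain ⟨r, hrep, qf, hqf, hA⟩ := hcopy hr hs
    have hstep : M.step M.start a ∈ (M.step · a) '' insert M.start S :=
      ⟨_, Set.mem_insert _ _, rfl⟩
    have hstart : NeverAccepts M M.start (a :: w) := neverAccepts_cons_iff.2
      ⟨Set.disjoint_left.1 hdisj hstep, neverAccepts_of_reach hr _ hstep⟩
    exact ⟨a :: r, hrep.cons hε (neverAccepts_eval_iff (m := []).1 hstart), qf, hqf,
      .cons hδ hA⟩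
  | enter hu _ =>
    obtain ⟨r, hrep, qf, hqf, hA⟩ := hmatch hr hs [a] rfl
    exact ⟨u ++ r, hrep, qf, hqf, reach_append_iff.2 ⟨_, _, _, hu, hA, rfl⟩⟩

theorem matchSound_cons {a : σ} {w : List σ} (hmatch : MatchSound M A u w)
    (hcopy : CopySound M A u (a :: w)) : MatchSound M A u (a :: w) := by
  intro q S d n s h hs m hm
  obtain ⟨s₁, η, n', ht, hr, rfl⟩ := reach_cons_iff.1 h
  replace ht : PreimageStep M A u (q, S, some d) a s₁ η := ht
  cases ht with
  | extend _ =>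
    obtain ⟨r, hrep, hA⟩ :=
      hmatch hr hs (m ++ [a]) (by rw [DFA.eval_append_singleton, hm])
    exact ⟨r, by simpa using hrep, by simpa using hA⟩
  | close hd ht₁ =>
    have hrun := Reach.cons (A := 𝒫) ht₁ hr
    obtain ⟨r, hrep, hA⟩ := hcopy hrun hs
    have hmE : m ∈ M.accepts := by rwa [DFA.mem_accepts, hm]
    have hmax : NoExtensionIn M.accepts m (a :: w) := by
      rw [← neverAccepts_eval_iff, hm]
      exact neverAccepts_of_reach hrun d (Set.mem_insert _ _)
    exact ⟨r, hrep.append_of_noExtensionIn hmE hmax, hA⟩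

theorem copySound (hε : [] ∉ M.accepts) (w : List σ) : CopySound M A u w := by
  suffices CopySound M A u w ∧ MatchSound M A u w from this.1
  induction w with
  | nil => exact ⟨copySound_nil hε, matchSound_nil hε⟩
  | cons a w ih =>
    have hcopy : CopySound M A u (a :: w) := copySound_cons hε ih.1 ih.2
    exact ⟨hcopy, matchSound_cons ih.2 hcopy⟩

variable (M A u) in
theorem lang_preimageCEFA (hε : [] ∉ M.accepts) :
    (𝒫).Lang = {p | ∃ r, ReplaceAll M.accepts u p.1 r ∧ (r, p.2) ∈ A.Lang} := by
  ext ⟨w, n⟩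
  constructor
  · rintro ⟨⟨q₀, S, o⟩, s, ⟨hq₀, hSo⟩, hs, h⟩
    obtain ⟨rfl, rfl⟩ := Prod.mk.inj hSo
    obtain ⟨r, hrep, qf, hqf, hA⟩ := copySound hε w h hs
    exact ⟨r, hrep, q₀, qf, hq₀, hqf, hA⟩
  · rintro ⟨r, hrep, q₀, qf, hq₀, hqf, hA⟩
    obtain ⟨s, hs, h⟩ := reach_of_replaceAll hε hrep (S := ∅) hA hqf (by simp)
    exact ⟨_, s, ⟨hq₀, rfl⟩, hs, h⟩

end Preimage

/-- for a regular language `E` with `ε ∉ E`, a word `u` and a CEFA `A` with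
`k` registers, the cost-enriched pre-image of `L(A)` under `replaceAll_{E,u}`, i.e.
`{(w, n) : (replaceAll_{E,u}(w), n) ∈ L(A)}`, is a CERL with `k` registers. -/
theorem replaceAll_preimage_isCERL {σ : Type} [Fintype σ] {k : ℕ}
    (E : Language σ) (hE : E.IsRegular) (hε : [] ∉ E) (u : List σ)
    (A : CEFA σ k) (hA : A.IsFinite) :
    IsCERL {p : List σ × (Fin k → ℤ) |
      ∃ r : List σ, ReplaceAll (E : Set (List σ)) u p.1 r ∧ (r, p.2) ∈ A.Lang} := by
  obtain ⟨QD, _, M, rfl⟩ := hE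
  exact ⟨preimageCEFA M A u, preimageCEFA_isFinite M A u hA, lang_preimageCEFA M A u hε⟩
end

section
/- Let I be a finite index set, and for each i ∈ I let (A_i^j)_{j ∈ J_i} be a finite family of CEFAs over Σ such that A_i^j has register vector R_i^j, where all the register vectors R_i^j are pairwise disjoint; let R' be the union of all R_i^j, and let P be any predicate on valuations θ : R' → ℤ. For each i, j let B_i^j be the monotonic CEFA obtained from A_i^j by splitting each register r ∈ R_i^j into two registers r⁺, r⁻ and replacing each update η by the update assigning max(η(r), 0) to r⁺ and max(−η(r), 0) to r⁻. Then the following are equivalent: (1) there exist a valuation θ : R' → ℤ and words (w_i)_{i ∈ I} such that P(θ) holds and (w_i, θ(R_i^j)) ∈ L(A_i^j) for every i ∈ I and j ∈ J_i; (2) there exist a valuation θ± assigning natural numbers to all the split registers and words (w_i)_{i ∈ I} such that P(θ') holds, where θ'(r) = θ±(r⁺) − θ±(r⁻) for every r ∈ R', and (w_i, θ±((R_i^j)±)) ∈ L(B_i^j) for every i ∈ I and j ∈ J_i. -/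
/-- The monotonic CEFA obtained from `A` by splitting each register `r` into `r⁺`
(the first `k` components) and `r⁻` (the last `k` components): each update `η` becomes
`(η⁺, η⁻)` where `η⁺(r) = max(η(r), 0)` and `η⁻(r) = max(−η(r), 0)`. -/
def CEFA.split {σ : Type} {k : ℕ} (A : CEFA σ k) : CEFA σ (k + k) where
  Q := A.Q
  δ := {t | ∃ (q q' : A.Q) (a : σ) (η : Fin k → ℤ), (q, a, q', η) ∈ A.δ ∧
        t = (q, a, q', Fin.append (fun r => max (η r) 0) (fun r => max (-η r) 0))}
  I := A.I
  F := A.F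

lemma reach_split_of_reach {σ : Type} {k : ℕ} {A : CEFA σ k} {q q' : A.Q} {w : List σ}
    {n : Fin k → ℤ} (h : CEFA.Reach A q w n q') :
    ∃ pm : Fin (k + k) → ℕ, CEFA.Reach A.split q w (fun r => (pm r : ℤ)) q' ∧
      ∀ r : Fin k, (pm (Fin.castAdd k r) : ℤ) - pm (Fin.natAdd k r) = n r := by
  induction h with
  | nil q =>
      refine ⟨0, ?_, by simp⟩
      simp only [Pi.zero_apply, Nat.cast_zero]
      exact CEFA.Reach.nil (A := A.split) q
  | @cons q q' q'' a w η n hδ _ ih =>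
      obtain ⟨pm, hre, hpm⟩ := ih
      refine ⟨fun r => (Fin.append (fun s => (η s).toNat) (fun s => (-η s).toNat)) r + pm r,
        ?_, ?_⟩
      · have hupdate : (fun r : Fin (k + k) =>
            (((Fin.append (fun s => (η s).toNat) (fun s => (-η s).toNat)) r + pm r : ℕ) : ℤ)) =
            Fin.append (fun s => max (η s) 0) (fun s => max (-η s) 0) + fun r => (pm r : ℤ) := by
          funext r
          refine Fin.addCases (fun s => ?_) (fun s => ?_) r
          · simp [Fin.append_left, Int.toNat_eq_max]
          · simp [Fin.append_right, Int.toNat_eq_max, -Fin.natAdd_eq_addNat]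
        rw [hupdate]
        exact CEFA.Reach.cons ⟨q, q', a, η, hδ, rfl⟩ hre
      · intro r
        simp only [Fin.append_left, Fin.append_right, Pi.add_apply]
        push_cast
        have := hpm r
        omega

lemma reach_of_reach_split {σ : Type} {k : ℕ} {A : CEFA σ k} {q q' : A.split.Q} {w : List σ}
    {c : Fin (k + k) → ℤ} (h : CEFA.Reach A.split q w c q') :
    ∃ n : Fin k → ℤ, CEFA.Reach A q w n q' ∧
      ∀ r : Fin k, n r = c (Fin.castAdd k r) - c (Fin.natAdd k r) := by
  induction h with
  | nil q => exact ⟨0, CEFA.Reach.nil (A := A) q, by simp⟩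
  | @cons q q' q'' a w η n hδ _ ih =>
      obtain ⟨n', hre, hn'⟩ := ih
      obtain ⟨p, p', b, η₀, hδ₀, ht⟩ := hδ
      obtain ⟨rfl, rfl, rfl, rfl⟩ := ht
      refine ⟨η₀ + n', CEFA.Reach.cons hδ₀ hre, fun r => ?_⟩
      simp only [Pi.add_apply, Fin.append_left, Fin.append_right, hn' r]
      have : max (η₀ r) 0 - max (-η₀ r) 0 = η₀ r := by omega
      omega

/-- reduction to monotonic CEFAs.  Registers of the family `(A i j)` are the
elements of the sigma type `Σ i, Σ j, Fin (k i j)` (this makes the register vectors of the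
various automata pairwise disjoint, with `R'` their union).  For any predicate `P` on
valuations `θ : R' → ℤ`: there exist `θ` and words `(w i)` with `P θ` and
`(w i, θ(R i j)) ∈ L(A i j)` for all `i, j`, iff there exist a natural-number valuation
`θ±` of the split registers and words `(w i)` with `P (fun r => θ±(r⁺) − θ±(r⁻))` and
`(w i, θ±((R i j)±)) ∈ L((A i j).split)` for all `i, j`. -/
theorem monotonic_split_equisat {σ : Type} [Fintype σ]
    {I : Type} [Finite I] {J : I → Type} [∀ i, Finite (J i)]
    (k : ∀ i, J i → ℕ) (A : ∀ i, (j : J i) → CEFA σ (k i j))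
    (hA : ∀ i j, (A i j).IsFinite)
    (P : ((Σ i, Σ j : J i, Fin (k i j)) → ℤ) → Prop) :
    (∃ (θ : (Σ i, Σ j : J i, Fin (k i j)) → ℤ) (w : I → List σ),
        P θ ∧ ∀ i, ∀ j : J i, (w i, fun r => θ ⟨i, j, r⟩) ∈ (A i j).Lang) ↔
    (∃ (θpm : (Σ i, Σ j : J i, Fin (k i j + k i j)) → ℕ) (w : I → List σ),
        P (fun x => (θpm ⟨x.1, x.2.1, Fin.castAdd _ x.2.2⟩ : ℤ) -
                    (θpm ⟨x.1, x.2.1, Fin.natAdd _ x.2.2⟩ : ℤ)) ∧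
        ∀ i, ∀ j : J i, (w i, fun r => (θpm ⟨i, j, r⟩ : ℤ)) ∈ (A i j).split.Lang) := by
  constructor
  · rintro ⟨θ, w, hP, hmem⟩
    choose q₀ qf hq₀ hqf hre using hmem
    have key := fun i j => reach_split_of_reach (hre i j)
    choose pm hpmre hpm using key
    refine ⟨fun x => pm x.1 x.2.1 x.2.2, w, ?_, fun i j => ⟨q₀ i j, qf i j, hq₀ i j, hqf i j, hpmre i j⟩⟩
    have : (fun x : (Σ i, Σ j : J i, Fin (k i j)) =>
        ((pm x.1 x.2.1 (Fin.castAdd _ x.2.2) : ℤ) - (pm x.1 x.2.1 (Fin.natAdd _ x.2.2) : ℤ))) = θ := by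
      funext x
      exact hpm x.1 x.2.1 x.2.2
    rw [this]
    exact hP
  · rintro ⟨θpm, w, hP, hmem⟩
    choose q₀ qf hq₀ hqf hre using hmem
    have key := fun i j => reach_of_reach_split (hre i j)
    choose n hnre hn using key
    refine ⟨fun x => (θpm ⟨x.1, x.2.1, Fin.castAdd _ x.2.2⟩ : ℤ) -
        (θpm ⟨x.1, x.2.1, Fin.natAdd _ x.2.2⟩ : ℤ), w, hP, fun i j => ?_⟩
    refine ⟨q₀ i j, qf i j, hq₀ i j, hqf i j, ?_⟩
    have : (fun r : Fin (k i j) => (θpm ⟨i, j, Fin.castAdd _ r⟩ : ℤ) - (θpm ⟨i, j, Fin.natAdd _ r⟩ : ℤ)) = n i j := by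
      funext r
      exact (hn i j r).symm
    rw [this]
    exact hnre i j
end
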